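/- For every k-strict partition λ, one has in ℤ[c,t] the expansion Θ_λ(c|t) = c_λ + Σ_μ a_{λμ} c_μ, a finite sum in which each a_{λμ} ∈ ℤ[t] and μ ranges over partitions μ ≠ λ such that either |μ| = |λ| and μ strictly dominates λ (i.e. Σ_{i≤m} μ_i ≥ Σ_{i≤m} λ_i for all m, with μ ≠ λ), or |μ| < |λ|. -/

import Mathlib

open scoped Classical

noncomputable section

/-- The polynomial ring ℤ[c,t]: variables `Sum.inl p` (p ≥ 1) are the `c` variables,
variables `Sum.inr i` (i ≥ 1) are the `t` variables. -/
abbrev P : Type := MvPolynomial (ℕ ⊕ ℕ) ℤ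

/-- t_r, with the convention t_r = t_{-r} for r < 0. -/
def tvar (r : ℤ) : P := MvPolynomial.X (Sum.inr r.natAbs)

/-- c_p, with c_0 = 1 and c_p = 0 for p < 0. -/
def cvar (p : ℤ) : P :=
  if p = 0 then 1 else if p < 0 then 0 else MvPolynomial.X (Sum.inl p.toNat)

def negT (i : ℕ) : P := - MvPolynomial.X (Sum.inr i)

/-- e_j(-t_1,…,-t_m). -/
def esymNT (m j : ℕ) : P :=
  ∑ S ∈ Finset.powersetCard j (Finset.Icc 1 m), ∏ i ∈ S, negT i

/-- h_j(-t_1,…,-t_m). -/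
def hsymNT (m j : ℕ) : P :=
  ∑ f ∈ (Finset.Icc 1 m).sym j, (Multiset.map negT (f : Multiset ℕ)).prod

/-- h^r_j(-t): complete homogeneous for r ≥ 0, elementary in |r| variables for r < 0,
and 0 for j < 0. -/
def hNT (r j : ℤ) : P :=
  if j < 0 then 0
  else if 0 ≤ r then hsymNT r.toNat j.toNat
  else esymNT (-r).toNat j.toNat

/-- c^r_p = Σ_{j=0}^p c_{p-j} h^r_j(-t). -/
def cc (r p : ℤ) : P :=
  ∑ j ∈ Finset.range (p.toNat + 1), cvar (p - j) * hNT r j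

/-- c^β_α = Π_i c^{β_i}_{α_i} (sequences are indexed from 1; entry 0 is inert since c^r_0 = 1). -/
def cmon (β α : ℕ → ℤ) : P := ∏ᶠ i, cc (β i) (α i)

/-- The sequence obtained from α by the raising-operator monomial Π_{(i,j)} R_{ij}^{n(i,j)}. -/
def raiseSeq (n : (ℕ × ℕ) →₀ ℕ) (α : ℕ → ℤ) : ℕ → ℤ := fun m =>
  α m + ∑ p ∈ n.support, (n p : ℤ) * ((if p.1 = m then 1 else 0) - (if p.2 = m then 1 else 0))

/-- Coefficient of R^m in the factor attached to one pair: (1-R) if `a` only,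
(1+R)⁻¹ if `b` only, (1-R)(1+R)⁻¹ if both, 1 if neither (only evaluated at m ≥ 1). -/
def pairCoeff (a b : Prop) (m : ℕ) : ℤ :=
  if a then (if b then 2 * (-1 : ℤ)^m else if m ≤ 1 then (-1 : ℤ)^m else 0)
  else (if b then (-1 : ℤ)^m else 0)

def roCoeff (A B : Set (ℕ × ℕ)) (n : (ℕ × ℕ) →₀ ℕ) : ℤ :=
  ∏ p ∈ n.support, pairCoeff (p ∈ A) (p ∈ B) (n p)

/-- Apply the raising operator expression Π_{p∈A}(1-R_p) · Π_{p∈B}(1+R_p)⁻¹ to c^β_α. -/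
def applyRO (A B : Set (ℕ × ℕ)) (β α : ℕ → ℤ) : P :=
  ∑ᶠ n : (ℕ × ℕ) →₀ ℕ, (roCoeff A B n) • cmon β (raiseSeq n α)

/-- The set Δ° of all pairs (i,j) with 1 ≤ i < j. -/
def Upper : Set (ℕ × ℕ) := {p | 1 ≤ p.1 ∧ p.1 < p.2}

/-- A valid set of pairs: a finite order ideal of Δ°. -/
def ValidPairs (D : Set (ℕ × ℕ)) : Prop :=
  D ⊆ Upper ∧ D.Finite ∧
    ∀ p ∈ D, ∀ q ∈ Upper, q.1 ≤ p.1 → q.2 ≤ p.2 → q ∈ D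

/-- a_j(D) = #{i < j : (i,j) ∉ D}. -/
def aD (D : Set (ℕ × ℕ)) (j : ℕ) : ℕ :=
  ((Finset.Ico 1 j).filter (fun i => (i, j) ∉ D)).card

/-- γ_j(D,μ) = k + 1 - μ_j + a_j(D). -/
def gammaSeq (k : ℕ) (D : Set (ℕ × ℕ)) (μ : ℕ → ℤ) (j : ℕ) : ℤ :=
  (k : ℤ) + 1 - μ j + aD D j

/-- T(D,μ) = R^D c^{γ(D,μ)}_μ, where R^D = Π_{i<j}(1-R_{ij}) Π_{(i,j)∈D}(1+R_{ij})⁻¹. -/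
def Tpol (k : ℕ) (D : Set (ℕ × ℕ)) (μ : ℕ → ℤ) : P :=
  applyRO Upper D (gammaSeq k D μ) μ

def FinSupp (α : ℕ → ℤ) : Prop := ∃ N, ∀ m, N ≤ m → α m = 0

/-- Partitions, as integer sequences indexed from 1 (entry 0 is 0). -/
def IsPartition (lam : ℕ → ℤ) : Prop :=
  lam 0 = 0 ∧ (∀ i, 1 ≤ i → 0 ≤ lam i) ∧ (∀ i, 1 ≤ i → lam (i+1) ≤ lam i) ∧ FinSupp lam

/-- k-strict partitions: parts greater than k are distinct. -/
def IsKStrict (k : ℕ) (lam : ℕ → ℤ) : Prop :=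
  IsPartition lam ∧ ∀ i, 1 ≤ i → (k : ℤ) < lam i → lam (i+1) < lam i

/-- C(λ) = {(i,j) : 1 ≤ i < j, λ_i + λ_j > 2k + j - i}. -/
def Cset (k : ℕ) (lam : ℕ → ℤ) : Set (ℕ × ℕ) :=
  {p | 1 ≤ p.1 ∧ p.1 < p.2 ∧ 2*(k:ℤ) + (p.2:ℤ) - (p.1:ℤ) < lam p.1 + lam p.2}

/-- β_j(λ) = k + 1 - λ_j + #{i < j : (i,j) ∉ C(λ)}. -/
def betaSeq (k : ℕ) (lam : ℕ → ℤ) (j : ℕ) : ℤ :=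
  (k : ℤ) + 1 - lam j + ((Finset.Ico 1 j).filter (fun i => (i, j) ∉ Cset k lam)).card

/-- The double theta polynomial Θ_λ(c|t) = R^λ c^{β(λ)}_λ. -/
def Theta (k : ℕ) (lam : ℕ → ℤ) : P :=
  applyRO Upper (Cset k lam) (betaSeq k lam) lam

def zeroSeq : ℕ → ℤ := fun _ => 0

/-- The single theta polynomial Θ_λ(c) = R^λ c_λ. -/
def ThetaSingle (k : ℕ) (lam : ℕ → ℤ) : P :=
  applyRO Upper (Cset k lam) zeroSeq lam

/-- The ideal generated by I^{(k)} in ℤ[c,t]. -/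
def Ik (k : ℕ) : Ideal P :=
  Ideal.span {x | ∃ p : ℕ, k < p ∧
    x = cvar (p:ℤ) * cvar (p:ℤ)
      + 2 * ∑ i ∈ Finset.Icc 1 p, (-1 : P)^i * (cvar ((p : ℤ) + i) * cvar ((p : ℤ) - i))}

/-- ℤ[t] = polynomials in t₁, t₂, …; variable n stands for t_{n+1}. -/
abbrev Zt : Type := MvPolynomial ℕ ℤ

/-- The embedding ℤ[t] → ℤ[c,t]. -/
def tEmbed : Zt →+* P :=
  (MvPolynomial.aeval (fun n : ℕ => (MvPolynomial.X (Sum.inr (n+1)) : P))).toRingHom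

/-- α ↦ α + r·ε_j. -/
def addAt (α : ℕ → ℤ) (j : ℕ) (r : ℤ) : ℕ → ℤ := fun m => α m + if m = j then r else 0

def epsSeq (j : ℕ) : ℕ → ℤ := fun m => if m = j then 1 else 0

/-- The sequence (λ_1,…,λ_{j-1}, r, s, μ_{j+2},…) with prescribed entries r, s at j, j+1. -/
def twoSet (ν : ℕ → ℤ) (j : ℕ) (r s : ℤ) : ℕ → ℤ :=
  fun m => if m = j then r else if m = j+1 then s else ν m

/-- Pairs (i,j) with 1 ≤ i < j ≤ ℓ. -/
def BddPairs (ℓ : ℕ) : Set (ℕ × ℕ) := {p | 1 ≤ p.1 ∧ p.1 < p.2 ∧ p.2 ≤ ℓ}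

/-- Boxes [r,c] and [r',c'] are k-related: |c-k-1| + r = |c'-k-1| + r'. -/
def kRel (k : ℕ) (r c r' c' : ℤ) : Prop :=
  |c - (k:ℤ) - 1| + r = |c' - (k:ℤ) - 1| + r'

/-- Case (i) of λ → μ: μ is obtained from λ by adding a single box (in some row h). -/
def ArrowBox (lam μ : ℕ → ℤ) : Prop :=
  ∃ h : ℕ, 1 ≤ h ∧ ∀ m, μ m = lam m + if m = h then 1 else 0

/-- Case (ii) of λ → μ: remove r boxes from a column c ≤ k of λ (giving ν) and add r+1
boxes to a single row h of ν, so that the removed boxes and the bottom box of μ in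
column c are each k-related to one of the added boxes. -/
def ArrowMove (k : ℕ) (lam μ : ℕ → ℤ) : Prop :=
  ∃ c h r : ℕ, 1 ≤ c ∧ c ≤ k ∧ 1 ≤ h ∧ 1 ≤ r ∧
    ∃ ν : ℕ → ℤ, IsPartition ν ∧
      ∃ S : Finset ℕ, S.card = r ∧
        (∀ x ∈ S, 1 ≤ x ∧ lam x = (c:ℤ) ∧ ν x = (c:ℤ) - 1) ∧
        (∀ x, x ∉ S → ν x = lam x) ∧
        (∀ m, μ m = ν m + if m = h then (r:ℤ) + 1 else 0) ∧
        (∀ x ∈ S, ∃ y : ℤ, ν h + 1 ≤ y ∧ y ≤ ν h + r + 1 ∧ kRel k x c h y) ∧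
        (∀ b : ℕ, 1 ≤ b → (c:ℤ) ≤ μ b → μ (b+1) < (c:ℤ) →
          ∃ y : ℤ, ν h + 1 ≤ y ∧ y ≤ ν h + r + 1 ∧ kRel k b c h y)

/-- λ → μ for k-strict partitions. -/
def ChevArrow (k : ℕ) (lam μ : ℕ → ℤ) : Prop :=
  IsKStrict k μ ∧ (ArrowBox lam μ ∨ ArrowMove k lam μ)

/-- The Chevalley coefficient e_{λμ}: 2 iff μ ⊃ λ with added box neither in column k+1
nor k-related to a bottom box in one of the first k columns of λ; 1 otherwise. -/
def eCoeff (k : ℕ) (lam μ : ℕ → ℤ) : ℤ :=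
  if ∃ h : ℕ, 1 ≤ h ∧ (∀ m, μ m = lam m + if m = h then 1 else 0) ∧
      lam h + 1 ≠ (k:ℤ) + 1 ∧
      ¬ ∃ c x : ℕ, 1 ≤ c ∧ c ≤ k ∧ 1 ≤ x ∧ (c:ℤ) ≤ lam x ∧ lam (x+1) < (c:ℤ) ∧
          kRel k x c h (lam h + 1)
  then 2 else 1

/-- Correspondence between k-strict partitions contained in the (n-k)×(n+k) rectangle and
k-Grassmannian elements of W_n (one-line notation w : ℕ → ℤ on indices 1..n). -/
def GrassCorrespond (k n : ℕ) (w : ℕ → ℤ) (lam : ℕ → ℤ) : Prop :=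
  (∀ m, 1 ≤ m → m ≤ n → 1 ≤ (w m).natAbs ∧ (w m).natAbs ≤ n) ∧
  (∀ m m', 1 ≤ m → m ≤ n → 1 ≤ m' → m' ≤ n → (w m).natAbs = (w m').natAbs → m = m') ∧
  (∀ m, 1 ≤ m → m ≤ k → 0 < w m) ∧
  (∀ m, 1 ≤ m → m + 1 ≤ k → w m < w (m+1)) ∧
  (∀ m, k + 1 ≤ m → m + 1 ≤ n → w m < w (m+1)) ∧
  (∀ i, 1 ≤ i → k + i ≤ n →
    (w (k+i) < 0 → lam i = (k:ℤ) + ((w (k+i)).natAbs : ℤ)) ∧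
    (0 < w (k+i) → lam i = (((Finset.Icc 1 k).filter (fun p => w (k+i) < w p)).card : ℤ))) ∧
  (∀ i, n - k < i → lam i = 0)

/-- The simple reflection s_i acting on the values ±1, …, ±n of signed permutations. -/
def sRefl (i : ℕ) (x : ℤ) : ℤ :=
  if i = 0 then (if x = 1 then -1 else if x = -1 then 1 else x)
  else if x = (i:ℤ) then (i:ℤ)+1
  else if x = (i:ℤ)+1 then (i:ℤ)
  else if x = -(i:ℤ) then -((i:ℤ)+1)
  else if x = -((i:ℤ)+1) then -(i:ℤ)
  else x

/-- Images of the variables under the automorphism s_i of ℤ[c,t]. -/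
def sImage (i : ℕ) : (ℕ ⊕ ℕ) → P
  | Sum.inl p =>
      if i = 0 then
        (if p = 0 then MvPolynomial.X (Sum.inl 0) else
          cvar (p:ℤ) + 2 * ∑ j ∈ Finset.Icc 1 p, (negT 1)^j * cvar ((p:ℤ) - (j:ℤ)))
      else MvPolynomial.X (Sum.inl p)
  | Sum.inr m =>
      if i = 0 then (if m = 1 then negT 1 else MvPolynomial.X (Sum.inr m))
      else if m = i then MvPolynomial.X (Sum.inr (i+1))
      else if m = i+1 then MvPolynomial.X (Sum.inr i)
      else MvPolynomial.X (Sum.inr m)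

/-- The ring endomorphism s_i of ℤ[c,t]. -/
def sAut (i : ℕ) : P →+* P := (MvPolynomial.aeval (sImage i)).toRingHom

/-- Denominator of the divided difference ∂_i: 2t₁ for i = 0, t_{i+1} - t_i for i ≥ 1. -/
def dden (i : ℕ) : P :=
  if i = 0 then 2 * MvPolynomial.X (Sum.inr 1)
  else MvPolynomial.X (Sum.inr (i+1)) - MvPolynomial.X (Sum.inr i)

/-- The divided difference operator ∂_i: the (unique, since P is a domain) quotient
(f - s_i f)/(denominator) whenever the division is exact. -/
def ddiff (i : ℕ) (f : P) : P :=
  if h : ∃ g : P, f - sAut i f = dden i * g then h.choose else 0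

section Aux
open Finset

lemma hNT_zero (r : ℤ) : hNT r 0 = 1 := by
  unfold hNT
  simp only [show ¬((0:ℤ) < 0) by omega, if_false, Int.toNat_zero]
  split
  · unfold hsymNT; rw [Finset.sym_zero]; rw [Finset.sum_singleton]; rfl
  · unfold esymNT; rw [Finset.powersetCard_zero]; simp

lemma cvar_zero : cvar 0 = 1 := by simp [cvar]

lemma cvar_neg {p : ℤ} (h : p < 0) : cvar p = 0 := by
  unfold cvar; rw [if_neg (by omega), if_pos h]

lemma cc_neg {r p : ℤ} (h : p < 0) : cc r p = 0 := by
  unfold cc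
  rw [show p.toNat = 0 from Int.toNat_of_nonpos (le_of_lt h)]
  simp [cvar_neg h, hNT_zero]

lemma cc_zero (r : ℤ) : cc r 0 = 1 := by
  unfold cc; simp [cvar_zero, hNT_zero]

lemma hNT_left_zero {j : ℤ} (hj : 0 < j) : hNT 0 j = 0 := by
  unfold hNT
  rw [if_neg (by omega), if_pos le_rfl]
  unfold hsymNT
  have : (Finset.Icc 1 (0:ℤ).toNat) = ∅ := by simp
  rw [this]
  have hj' : j.toNat ≠ 0 := by omega
  obtain ⟨j', hj2⟩ := Nat.exists_eq_succ_of_ne_zero hj'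
  rw [hj2, Finset.sym_empty]
  simp

lemma cc_zero_left (p : ℤ) : cc 0 p = cvar p := by
  rcases lt_trichotomy p 0 with h | h | h
  · rw [cc_neg h, cvar_neg h]
  · subst h; rw [cc_zero, cvar_zero]
  · unfold cc
    rw [Finset.sum_eq_single 0]
    · simp [hNT_zero]
    · intro j hj hj0
      rw [hNT_left_zero (by exact_mod_cast Nat.pos_of_ne_zero hj0), mul_zero]
    · simp

end Aux
section Aux2
open Finset

lemma raiseSeq_zero (α : ℕ → ℤ) : raiseSeq 0 α = α := by
  funext m; unfold raiseSeq; simp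

lemma raiseSeq_eq_self {n : (ℕ × ℕ) →₀ ℕ} {α : ℕ → ℤ} {m : ℕ}
    (h : ∀ p ∈ n.support, p.1 ≠ m ∧ p.2 ≠ m) : raiseSeq n α m = α m := by
  unfold raiseSeq
  rw [Finset.sum_eq_zero, add_zero]
  intro p hp
  rw [if_neg (h p hp).1, if_neg (h p hp).2]
  ring

lemma raiseSeq_finsupp (n : (ℕ × ℕ) →₀ ℕ) {α : ℕ → ℤ} {N : ℕ}
    (hα : ∀ m, N ≤ m → α m = 0) :
    ∀ m, max N (n.support.sup (fun p => max p.1 p.2) + 1) ≤ m → raiseSeq n α m = 0 := by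
  intro m hm
  rw [raiseSeq_eq_self, hα m (le_trans (le_max_left _ _) hm)]
  intro p hp
  have h1 : max p.1 p.2 ≤ n.support.sup (fun p => max p.1 p.2) :=
    Finset.le_sup (f := fun p => max p.1 p.2) hp
  have h2 := le_trans (le_max_right N _) hm
  omega

lemma prefix_raiseSeq (n : (ℕ × ℕ) →₀ ℕ) (α : ℕ → ℤ) (m : ℕ) :
    ∑ i ∈ Finset.Icc 1 m, raiseSeq n α i
      = (∑ i ∈ Finset.Icc 1 m, α i) + ∑ p ∈ n.support, (n p : ℤ) *
          ((if p.1 ∈ Finset.Icc 1 m then 1 else 0) - (if p.2 ∈ Finset.Icc 1 m then 1 else 0)) := by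
  unfold raiseSeq
  rw [Finset.sum_add_distrib]
  congr 1
  rw [Finset.sum_comm]
  refine Finset.sum_congr rfl (fun p _ => ?_)
  rw [← Finset.mul_sum]
  congr 1
  rw [Finset.sum_sub_distrib, Finset.sum_ite_eq, Finset.sum_ite_eq]

lemma prefix_raiseSeq_ge {n : (ℕ × ℕ) →₀ ℕ} (α : ℕ → ℤ) (m : ℕ)
    (hsupp : ∀ p ∈ n.support, 1 ≤ p.1 ∧ p.1 < p.2) :
    ∑ i ∈ Finset.Icc 1 m, α i ≤ ∑ i ∈ Finset.Icc 1 m, raiseSeq n α i := by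
  rw [prefix_raiseSeq]
  have : (0:ℤ) ≤ ∑ p ∈ n.support, (n p : ℤ) *
      ((if p.1 ∈ Finset.Icc 1 m then 1 else 0) - (if p.2 ∈ Finset.Icc 1 m then 1 else 0)) := by
    refine Finset.sum_nonneg (fun p hp => ?_)
    refine mul_nonneg (by positivity) ?_
    have h := hsupp p hp
    simp only [Finset.mem_Icc]
    split <;> split <;> omega
  omega

lemma prefix_raiseSeq_eq {n : (ℕ × ℕ) →₀ ℕ} (α : ℕ → ℤ) (m : ℕ)
    (hsupp : ∀ p ∈ n.support, 1 ≤ p.1 ∧ p.1 < p.2 ∧ p.2 ≤ m) :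
    ∑ i ∈ Finset.Icc 1 m, raiseSeq n α i = ∑ i ∈ Finset.Icc 1 m, α i := by
  rw [prefix_raiseSeq]
  have hz : (∑ p ∈ n.support, (n p : ℤ) *
      ((if p.1 ∈ Finset.Icc 1 m then 1 else 0) - (if p.2 ∈ Finset.Icc 1 m then 1 else 0))) = 0 := by
    refine Finset.sum_eq_zero (fun p hp => ?_)
    have h := hsupp p hp
    rw [if_pos (by simp only [Finset.mem_Icc]; omega),
      if_pos (by simp only [Finset.mem_Icc]; omega)]
    ring
  rw [hz, add_zero]

lemma single_flow_le {n : (ℕ × ℕ) →₀ ℕ} (α : ℕ → ℤ) {p₀ : ℕ × ℕ} (hp₀ : p₀ ∈ n.support)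
    (hsupp : ∀ p ∈ n.support, 1 ≤ p.1 ∧ p.1 < p.2) :
    (n p₀ : ℤ) ≤ (∑ i ∈ Finset.Icc 1 p₀.1, raiseSeq n α i) - ∑ i ∈ Finset.Icc 1 p₀.1, α i := by
  rw [prefix_raiseSeq]
  have key : ∀ p ∈ n.support, (0:ℤ) ≤ (n p : ℤ) *
      ((if p.1 ∈ Finset.Icc 1 p₀.1 then 1 else 0) - (if p.2 ∈ Finset.Icc 1 p₀.1 then 1 else 0)) := by
    intro p hp
    refine mul_nonneg (by positivity) ?_
    have h := hsupp p hp
    simp only [Finset.mem_Icc]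
    split <;> split <;> omega
  have h0 := hsupp p₀ hp₀
  have hterm : (n p₀ : ℤ) = (n p₀ : ℤ) *
      ((if p₀.1 ∈ Finset.Icc 1 p₀.1 then 1 else 0) - (if p₀.2 ∈ Finset.Icc 1 p₀.1 then 1 else 0)) := by
    rw [if_pos (by simp only [Finset.mem_Icc]; omega), if_neg (by simp only [Finset.mem_Icc]; omega)]
    ring
  have := Finset.single_le_sum key hp₀
  omega

lemma flow_zero {n : (ℕ × ℕ) →₀ ℕ} (α : ℕ → ℤ)
    (hsupp : ∀ p ∈ n.support, 1 ≤ p.1 ∧ p.1 < p.2)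
    (heq : ∀ m, ∑ i ∈ Finset.Icc 1 m, raiseSeq n α i = ∑ i ∈ Finset.Icc 1 m, α i) :
    n = 0 := by
  rw [← Finsupp.support_eq_empty, Finset.eq_empty_iff_forall_notMem]
  intro p₀ hp₀
  have h1 := single_flow_le α hp₀ hsupp
  rw [heq p₀.1] at h1
  have h2 : n p₀ ≠ 0 := Finsupp.mem_support_iff.mp hp₀
  omega

lemma cmon_eq_prod {β α : ℕ → ℤ} {K : ℕ} (h : ∀ m, K ≤ m → α m = 0) :
    cmon β α = ∏ i ∈ Finset.range K, cc (β i) (α i) := by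
  refine finprod_eq_prod_of_mulSupport_subset _ (fun m hm => ?_)
  simp only [Finset.coe_range, Set.mem_Iio]
  by_contra hK
  push_neg at hK
  rw [Function.mem_mulSupport, h m hK, cc_zero] at hm
  exact hm rfl

lemma cmon_eq_zero {β α : ℕ → ℤ} {K : ℕ} (h : ∀ m, K ≤ m → α m = 0)
    {m₀ : ℕ} (hneg : α m₀ < 0) : cmon β α = 0 := by
  rw [cmon_eq_prod h]
  refine Finset.prod_eq_zero (i := m₀) ?_ (cc_neg hneg)
  simp only [Finset.mem_range]
  by_contra hK
  push_neg at hK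
  rw [h m₀ hK] at hneg
  omega

end Aux2
section Aux3
open Finset

def negT' (i : ℕ) : Zt := - MvPolynomial.X (i - 1)

def esymNT' (m j : ℕ) : Zt :=
  ∑ S ∈ Finset.powersetCard j (Finset.Icc 1 m), ∏ i ∈ S, negT' i

def hsymNT' (m j : ℕ) : Zt :=
  ∑ f ∈ (Finset.Icc 1 m).sym j, (Multiset.map negT' (f : Multiset ℕ)).prod

def hNT' (r j : ℤ) : Zt :=
  if j < 0 then 0
  else if 0 ≤ r then hsymNT' r.toNat j.toNat
  else esymNT' (-r).toNat j.toNat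

lemma tEmbed_negT {i : ℕ} (hi : 1 ≤ i) : tEmbed (negT' i) = negT i := by
  unfold tEmbed negT' negT
  rw [map_neg]
  simp only [AlgHom.toRingHom_eq_coe, RingHom.coe_coe, MvPolynomial.aeval_X]
  rw [show i - 1 + 1 = i by omega]

lemma tEmbed_esymNT (m j : ℕ) : tEmbed (esymNT' m j) = esymNT m j := by
  unfold esymNT' esymNT
  rw [map_sum]
  refine Finset.sum_congr rfl (fun S hS => ?_)
  rw [map_prod]
  refine Finset.prod_congr rfl (fun i hiS => ?_)
  have : i ∈ Finset.Icc 1 m := Finset.mem_powersetCard.mp hS |>.1 hiS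
  exact tEmbed_negT (Finset.mem_Icc.mp this).1

lemma tEmbed_hsymNT (m j : ℕ) : tEmbed (hsymNT' m j) = hsymNT m j := by
  unfold hsymNT' hsymNT
  rw [map_sum]
  refine Finset.sum_congr rfl (fun f hf => ?_)
  rw [map_multiset_prod, Multiset.map_map]
  congr 1
  refine Multiset.map_congr rfl (fun i hif => ?_)
  have : i ∈ Finset.Icc 1 m := (Finset.mem_sym_iff.mp hf) i hif
  exact tEmbed_negT (Finset.mem_Icc.mp this).1

lemma tEmbed_hNT (r j : ℤ) : tEmbed (hNT' r j) = hNT r j := by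
  unfold hNT' hNT
  split
  · rw [map_zero]
  · split
    · exact tEmbed_hsymNT _ _
    · exact tEmbed_esymNT _ _

lemma list_take_sum : ∀ (L : List ℕ) (j : ℕ),
    ((L.take j).sum : ℤ) = ∑ i ∈ Finset.range j, ((L.getD i 0 : ℕ) : ℤ) := by
  intro L
  induction L with
  | nil => intro j; simp
  | cons a L ih =>
    intro j
    cases j with
    | zero => simp
    | succ j' =>
      rw [List.take_succ_cons, Finset.sum_range_succ']
      simp only [List.sum_cons, List.getD_cons_succ, List.getD_cons_zero]
      push_cast
      rw [← ih j']
      push_cast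
      ring

lemma list_prod_map_eq_prod_range {M : Type*} [CommMonoid M] :
    ∀ (L : List ℕ) (f : ℕ → M),
    ∏ i ∈ Finset.range L.length, f (L.getD i 0) = (L.map f).prod := by
  intro L
  induction L with
  | nil => intro f; simp
  | cons a L ih =>
    intro f
    rw [List.length_cons, Finset.prod_range_succ']
    simp only [List.getD_cons_succ, List.getD_cons_zero, List.map_cons, List.prod_cons]
    rw [ih f, mul_comm]

lemma multiset_le_of_not_mem {a : ℕ} {t s : Multiset ℕ} (h : t ≤ a ::ₘ s) (ha : a ∉ t) :
    t ≤ s := by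
  rw [Multiset.le_iff_count] at h ⊢
  intro b
  have := h b
  rcases eq_or_ne b a with rfl | hb
  · simp [Multiset.count_eq_zero_of_notMem ha]
  · rwa [Multiset.count_cons_of_ne hb] at this

lemma take_sum_le : ∀ (L : List ℕ), L.Pairwise (· ≥ ·) →
    ∀ (t : Multiset ℕ), t ≤ ↑L → ∀ j, Multiset.card t ≤ j → t.sum ≤ (L.take j).sum := by
  intro L
  induction L with
  | nil =>
    intro _ t ht j _
    have : t = 0 := Multiset.le_zero.mp (by simpa using ht)
    simp [this]
  | cons a L ih =>
    intro hsort t ht j hcard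
    have hsort' : L.Pairwise (· ≥ ·) := hsort.of_cons
    by_cases hat : a ∈ t
    · obtain ⟨t', rfl⟩ : ∃ t', t = a ::ₘ t' := ⟨t.erase a, (Multiset.cons_erase hat).symm⟩
      have ht' : t' ≤ ↑L := by
        have := Multiset.erase_le_erase a ht
        rwa [← Multiset.cons_coe, Multiset.erase_cons_head, Multiset.erase_cons_head] at this
      have hcard' : Multiset.card t' + 1 ≤ j := by
        have := Multiset.card_cons a t'
        omega
      obtain ⟨j', rfl⟩ : ∃ j', j = j' + 1 := ⟨j - 1, by omega⟩
      rw [List.take_succ_cons, List.sum_cons, Multiset.sum_cons]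
      have := ih hsort' t' ht' j' (by omega)
      omega
    · have ht' : t ≤ ↑L := multiset_le_of_not_mem (by simpa using ht) hat
      cases j with
      | zero =>
        have : t = 0 := Multiset.card_eq_zero.mp (by omega)
        simp [this]
      | succ j' =>
        have h1 := ih hsort' t ht' (j' + 1) hcard
        -- (L.take (j'+1)).sum ≤ a + (L.take j').sum
        have h2 : (L.take (j' + 1)).sum ≤ a + (L.take j').sum := by
          by_cases hlen : j' < L.length
          · rw [List.sum_take_succ L j' hlen]
            have : L[j'] ≤ a := by
              rcases hsort with _ | ⟨h, _⟩
              exact h _ (List.getElem_mem hlen)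
            omega
          · rw [List.take_of_length_le (by omega), List.take_of_length_le (by omega)]
            omega
        rw [List.take_succ_cons, List.sum_cons]
        omega

end Aux3
section Aux4
open Finset

lemma prod_Icc_one_eq {M : Type*} [CommMonoid M] (f : ℕ → M) :
    ∀ N, ∏ i ∈ Finset.Icc 1 N, f i = ∏ i ∈ Finset.range N, f (i + 1) := by
  intro N
  induction N with
  | zero => simp
  | succ N ih =>
    have h1 : Finset.Icc 1 (N + 1) = insert (N + 1) (Finset.Icc 1 N) := by
      ext x; simp only [Finset.mem_Icc, Finset.mem_insert]; omega
    rw [h1, Finset.prod_insert (by simp), Finset.prod_range_succ, ih, mul_comm]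

lemma sum_Icc_one_eq {M : Type*} [AddCommMonoid M] (f : ℕ → M) :
    ∀ N, ∑ i ∈ Finset.Icc 1 N, f i = ∑ i ∈ Finset.range N, f (i + 1) := by
  intro N
  induction N with
  | zero => simp
  | succ N ih =>
    have h1 : Finset.Icc 1 (N + 1) = insert (N + 1) (Finset.Icc 1 N) := by
      ext x; simp only [Finset.mem_Icc, Finset.mem_insert]; omega
    rw [h1, Finset.sum_insert (by simp), Finset.sum_range_succ, ih, add_comm]

def sortList (N : ℕ) (ν : ℕ → ℤ) : List ℕ :=
  Multiset.sort (Multiset.map (fun i => (ν i).toNat) (Finset.Icc 1 N).val) (· ≥ ·)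

def sortSeq (N : ℕ) (ν : ℕ → ℤ) : ℕ → ℤ :=
  fun j => if 1 ≤ j ∧ j ≤ N then (((sortList N ν).getD (j - 1) 0 : ℕ) : ℤ) else 0

lemma sortList_length (N : ℕ) (ν : ℕ → ℤ) : (sortList N ν).length = N := by
  unfold sortList
  rw [Multiset.length_sort, Multiset.card_map]
  simp [Nat.card_Icc]

lemma sortSeq_zero_of_gt {N : ℕ} {ν : ℕ → ℤ} {m : ℕ} (h : N < m) : sortSeq N ν m = 0 := by
  unfold sortSeq; rw [if_neg (by omega)]

lemma sortSeq_nonneg (N : ℕ) (ν : ℕ → ℤ) (m : ℕ) : 0 ≤ sortSeq N ν m := by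
  unfold sortSeq; split
  · positivity
  · exact le_refl 0

lemma sortSeq_isPartition (N : ℕ) (ν : ℕ → ℤ) : IsPartition (sortSeq N ν) := by
  refine ⟨by unfold sortSeq; rw [if_neg (by omega)], fun i _ => sortSeq_nonneg N ν i, ?_, N + 1, fun m hm => sortSeq_zero_of_gt (by omega)⟩
  intro i hi
  by_cases hiN : i + 1 ≤ N
  · unfold sortSeq
    rw [if_pos (by omega), if_pos (by omega)]
    have hlen := sortList_length N ν
    have h1 : i - 1 < (sortList N ν).length := by omega
    have h2 : i + 1 - 1 < (sortList N ν).length := by omega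
    rw [List.getD_eq_getElem _ _ h1, List.getD_eq_getElem _ _ h2]
    have := (show (sortList N ν).Pairwise (· ≥ ·) from Multiset.pairwise_sort _ _).rel_get_of_lt
      (a := ⟨i - 1, h1⟩) (b := ⟨i + 1 - 1, h2⟩) (by simp only [Fin.mk_lt_mk]; omega)
    exact_mod_cast this
  · rw [sortSeq_zero_of_gt (by omega)]
    exact sortSeq_nonneg N ν i

lemma sortList_coe (N : ℕ) (ν : ℕ → ℤ) :
    (↑(sortList N ν) : Multiset ℕ) = Multiset.map (fun i => (ν i).toNat) (Finset.Icc 1 N).val :=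
  Multiset.sort_eq _ _

lemma sortSeq_prefix_list (N : ℕ) (ν : ℕ → ℤ) {j : ℕ} (hj : j ≤ N) :
    ∑ i ∈ Finset.Icc 1 j, sortSeq N ν i = (((sortList N ν).take j).sum : ℤ) := by
  rw [sum_Icc_one_eq, list_take_sum]
  refine Finset.sum_congr rfl (fun i hi => ?_)
  have hi' : i < j := Finset.mem_range.mp hi
  unfold sortSeq
  rw [if_pos (by omega)]
  norm_num

lemma sortSeq_total (N : ℕ) (ν : ℕ → ℤ) (hν : ∀ i, 0 ≤ ν i) {j : ℕ} (hj : N ≤ j) :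
    ∑ i ∈ Finset.Icc 1 j, sortSeq N ν i = ∑ i ∈ Finset.Icc 1 N, ν i := by
  have h1 : ∑ i ∈ Finset.Icc 1 j, sortSeq N ν i = ∑ i ∈ Finset.Icc 1 N, sortSeq N ν i := by
    symm
    refine Finset.sum_subset (fun x hx => ?_) (fun x hx hxn => ?_)
    · simp only [Finset.mem_Icc] at hx ⊢; omega
    · simp only [Finset.mem_Icc] at hx hxn
      exact sortSeq_zero_of_gt (by omega)
  rw [h1, sortSeq_prefix_list N ν le_rfl]
  have h2 : (sortList N ν).take N = sortList N ν :=
    List.take_of_length_le (le_of_eq (sortList_length N ν))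
  rw [h2]
  have h3 : ((sortList N ν).sum : ℤ) = ∑ i ∈ Finset.Icc 1 N, ν i := by
    have h4 : (sortList N ν).sum = (↑(sortList N ν) : Multiset ℕ).sum := rfl
    rw [h4, sortList_coe]
    rw [show (Multiset.map (fun i => (ν i).toNat) (Finset.Icc 1 N).val).sum
        = ∑ i ∈ Finset.Icc 1 N, (ν i).toNat from (Finset.sum_eq_multiset_sum _ _).symm]
    push_cast
    refine Finset.sum_congr rfl (fun i _ => Int.toNat_of_nonneg (hν i))
  rw [h3]

lemma sortSeq_prefix_ge (N : ℕ) (ν : ℕ → ℤ) (hν : ∀ i, 0 ≤ ν i)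
    (hν0 : ∀ i, N < i → ν i = 0) (j : ℕ) :
    ∑ i ∈ Finset.Icc 1 j, ν i ≤ ∑ i ∈ Finset.Icc 1 j, sortSeq N ν i := by
  by_cases hj : j ≤ N
  · rw [sortSeq_prefix_list N ν hj]
    set t : Multiset ℕ := Multiset.map (fun i => (ν i).toNat) (Finset.Icc 1 j).val with ht
    have hsub : t ≤ ↑(sortList N ν) := by
      rw [sortList_coe]
      exact Multiset.map_le_map (Finset.val_le_iff.mpr (fun x hx => by
        simp only [Finset.mem_Icc] at hx ⊢; omega))
    have hcard : Multiset.card t ≤ j := by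
      rw [ht, Multiset.card_map]
      simp [Nat.card_Icc]
    have hle := take_sum_le (sortList N ν) (Multiset.pairwise_sort _ _) t hsub j hcard
    have hts : (t.sum : ℤ) = ∑ i ∈ Finset.Icc 1 j, ν i := by
      rw [ht, show (Multiset.map (fun i => (ν i).toNat) (Finset.Icc 1 j).val).sum
          = ∑ i ∈ Finset.Icc 1 j, (ν i).toNat from (Finset.sum_eq_multiset_sum _ _).symm]
      push_cast
      exact Finset.sum_congr rfl (fun i _ => Int.toNat_of_nonneg (hν i))
    rw [← hts]
    exact_mod_cast hle
  · push_neg at hj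
    have h1 : ∑ i ∈ Finset.Icc 1 j, ν i = ∑ i ∈ Finset.Icc 1 N, ν i := by
      symm
      refine Finset.sum_subset (fun x hx => ?_) (fun x hx hxn => ?_)
      · simp only [Finset.mem_Icc] at hx ⊢; omega
      · simp only [Finset.mem_Icc] at hx hxn
        exact hν0 x (by omega)
    rw [h1, sortSeq_total N ν hν (by omega)]

lemma sortSeq_cmon (N : ℕ) (ν : ℕ → ℤ) (hν : ∀ i, 0 ≤ ν i) (hν00 : ν 0 = 0) :
    cmon zeroSeq (sortSeq N ν) = ∏ i ∈ Finset.range (N + 1), cvar (ν i) := by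
  rw [cmon_eq_prod (K := N + 1) (fun m hm => sortSeq_zero_of_gt (by omega))]
  have hz : ∀ i, cc (zeroSeq i) (sortSeq N ν i) = cvar (sortSeq N ν i) := fun i =>
    cc_zero_left _
  rw [Finset.prod_congr rfl (fun i _ => hz i)]
  have hins : Finset.range (N + 1) = insert 0 (Finset.Icc 1 N) := by
    ext x; simp only [Finset.mem_range, Finset.mem_insert, Finset.mem_Icc]; omega
  rw [hins, Finset.prod_insert (by simp), Finset.prod_insert (by simp)]
  have h00 : sortSeq N ν 0 = 0 := by unfold sortSeq; rw [if_neg (by omega)]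
  rw [h00, hν00]
  congr 1
  rw [prod_Icc_one_eq, prod_Icc_one_eq]
  have hlen := sortList_length N ν
  have hL : ∏ i ∈ Finset.range N, cvar (sortSeq N ν (i + 1))
      = ((sortList N ν).map (fun x : ℕ => cvar (x : ℤ))).prod := by
    rw [← list_prod_map_eq_prod_range (sortList N ν) (fun x : ℕ => cvar (x : ℤ)), hlen]
    refine Finset.prod_congr rfl (fun i hi => ?_)
    have : i < N := Finset.mem_range.mp hi
    unfold sortSeq
    rw [if_pos (by omega)]
    norm_num
  rw [hL]
  have hR : ((sortList N ν).map (fun x : ℕ => cvar (x : ℤ))).prod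
      = (Multiset.map (fun x : ℕ => cvar (x : ℤ)) (↑(sortList N ν) : Multiset ℕ)).prod := rfl
  rw [hR, sortList_coe, Multiset.map_map]
  rw [show (Multiset.map ((fun x : ℕ => cvar (x:ℤ)) ∘ fun i => (ν i).toNat) (Finset.Icc 1 N).val).prod
      = ∏ i ∈ Finset.Icc 1 N, cvar (((ν i).toNat : ℕ) : ℤ) from
    (Finset.prod_eq_multiset_prod _ _).symm]
  rw [prod_Icc_one_eq]
  refine Finset.prod_congr rfl (fun i _ => ?_)
  rw [Int.toNat_of_nonneg (hν (i + 1))]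

end Aux4

open Finset in
set_option maxHeartbeats 2000000 in
theorem stmt7 (k : ℕ) (lam : ℕ → ℤ) (hlam : IsKStrict k lam) :
    ∃ a : (ℕ → ℤ) →₀ Zt,
      (∀ μ ∈ a.support, IsPartition μ ∧ μ ≠ lam ∧
        (((∑ᶠ i, μ i) = (∑ᶠ i, lam i) ∧
            ∀ m : ℕ, (∑ i ∈ Finset.Icc 1 m, lam i) ≤ ∑ i ∈ Finset.Icc 1 m, μ i) ∨
          (∑ᶠ i, μ i) < ∑ᶠ i, lam i)) ∧
      Theta k lam = cmon zeroSeq lam + a.sum fun μ s => tEmbed s * cmon zeroSeq μ := by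

  classical
  obtain ⟨⟨hlam0, hlampos, _hlamdec, N₀, hN₀⟩, _hstrict⟩ := hlam
  set N : ℕ := N₀ + 1 with hNdef
  have hlamzero : ∀ m, N ≤ m → lam m = 0 := fun m hm => hN₀ m (by omega)
  have hlamnn : ∀ i, 0 ≤ lam i := by
    intro i
    rcases Nat.eq_zero_or_pos i with rfl | hi
    · rw [hlam0]
    · exact hlampos i hi
  have hlamsupp : (Function.support lam) ⊆ ↑(Finset.Icc 1 N) := by
    intro m hm
    simp only [Function.mem_support] at hm
    simp only [Finset.coe_Icc, Set.mem_Icc]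
    constructor
    · by_contra h; push_neg at h
      exact hm (by rw [show m = 0 by omega, hlam0])
    · by_contra h; push_neg at h
      exact hm (hlamzero m (by omega))
  set W : ℕ := (∑ i ∈ Finset.Icc 1 N, lam i).toNat with hWdef
  have hWval : (W : ℤ) = ∑ i ∈ Finset.Icc 1 N, lam i :=
    Int.toNat_of_nonneg (Finset.sum_nonneg fun i _ => hlamnn i)
  set T : Finset (ℕ × ℕ) := (Finset.range (N+1)) ×ˢ (Finset.range (N+1)) with hTdef
  set B : (ℕ × ℕ) →₀ ℕ := Finsupp.indicator T (fun _ _ => W) with hBdef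
  -- `Good` predicate
  set Good : ((ℕ × ℕ) →₀ ℕ) → Prop :=
    fun n => (∀ p ∈ n.support, 1 ≤ p.1 ∧ p.1 < p.2) ∧ ∀ m, 0 ≤ raiseSeq n lam m with hGood
  set term : ((ℕ × ℕ) →₀ ℕ) → P :=
    fun n => roCoeff Upper (Cset k lam) n • cmon (betaSeq k lam) (raiseSeq n lam) with hterm
  have hCU : ∀ p : ℕ × ℕ, p ∈ Cset k lam → 1 ≤ p.1 ∧ p.1 < p.2 := by
    intro p hp
    obtain ⟨h1, h2, _⟩ := hp
    exact ⟨h1, h2⟩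
  have hUmem : ∀ p : ℕ × ℕ, p ∈ Upper ↔ (1 ≤ p.1 ∧ p.1 < p.2) := fun p => Iff.rfl
  have hcoefzero : ∀ n : (ℕ × ℕ) →₀ ℕ,
      (¬ ∀ p ∈ n.support, 1 ≤ p.1 ∧ p.1 < p.2) → roCoeff Upper (Cset k lam) n = 0 := by
    intro n hn
    push_neg at hn
    obtain ⟨p, hp, hpU⟩ := hn
    have hpU' : ¬(1 ≤ p.1 ∧ p.1 < p.2) := fun hc => by
      have := hpU hc.1; omega
    refine Finset.prod_eq_zero hp ?_
    unfold pairCoeff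
    rw [if_neg (by rw [hUmem]; exact hpU'), if_neg (fun hc => hpU' (hCU p hc))]
  have htermzero : ∀ n, ¬ Good n → term n = 0 := by
    intro n hn
    simp only [hGood] at hn
    push_neg at hn
    by_cases h1 : ∀ p ∈ n.support, 1 ≤ p.1 ∧ p.1 < p.2
    · obtain ⟨m₀, hm₀⟩ := hn h1
      simp only [hterm]
      rw [cmon_eq_zero (raiseSeq_finsupp n hlamzero) (by omega : raiseSeq n lam m₀ < 0), smul_zero]
    · simp only [hterm]
      rw [hcoefzero n h1, zero_smul]
  -- support of good n is inside T
  have hsuppT : ∀ n, Good n → ∀ p ∈ n.support, p.1 < N ∧ p.2 < N := by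
    intro n hGn p hp
    obtain ⟨hU, hnn⟩ := hGn
    have hne : n.support.Nonempty := ⟨p, hp⟩
    obtain ⟨p₀, hp₀, hp₀eq⟩ := Finset.exists_mem_eq_sup n.support hne (fun q => q.2)
    set M : ℕ := n.support.sup (fun q => q.2) with hM
    -- the raising sum at M is ≤ -1
    have hterm_nonpos : ∀ q ∈ n.support,
        (n q : ℤ) * ((if q.1 = M then 1 else 0) - (if q.2 = M then 1 else 0)) ≤ 0 := by
      intro q hq
      have h1 : q.1 ≠ M := by
        have hq12 := (hU q hq).2
        have hq2M : q.2 ≤ M := by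
          simpa using Finset.le_sup (f := fun q : ℕ × ℕ => q.2) hq
        omega
      rw [if_neg h1]
      have : (0:ℤ) ≤ (n q : ℤ) := by positivity
      split <;> nlinarith
    have hsum_le : ∑ q ∈ n.support,
        (n q : ℤ) * ((if q.1 = M then 1 else 0) - (if q.2 = M then 1 else 0)) ≤ -1 := by
      rw [Finset.sum_eq_sum_sdiff_singleton_add hp₀]
      have h2 : ∑ q ∈ n.support \ {p₀},
          (n q : ℤ) * ((if q.1 = M then 1 else 0) - (if q.2 = M then 1 else 0)) ≤ 0 :=
        Finset.sum_nonpos (fun q hq => hterm_nonpos q (Finset.mem_sdiff.mp hq).1)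
      have h3 : (n p₀ : ℤ) * ((if p₀.1 = M then 1 else 0) - (if p₀.2 = M then 1 else 0)) ≤ -1 := by
        have hne1 : p₀.1 ≠ M := by
          have := (hU p₀ hp₀).2
          omega
        rw [if_neg hne1, if_pos hp₀eq.symm]
        have : 1 ≤ (n p₀ : ℤ) := by
          have := Finsupp.mem_support_iff.mp hp₀
          omega
        nlinarith
      omega
    have hRM : 0 ≤ raiseSeq n lam M := hnn M
    have hlamM : 1 ≤ lam M := by
      unfold raiseSeq at hRM
      omega
    have hMN : M < N := by
      by_contra h; push_neg at h
      rw [hlamzero M h] at hlamM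
      omega
    have hq2 : p.2 ≤ M := by simpa using Finset.le_sup (f := fun q : ℕ × ℕ => q.2) hp
    have := (hU p hp).2
    omega
  have hgoodIic : ∀ n, Good n → n ∈ Finset.Iic B := by
    intro n hGn
    rw [Finset.mem_Iic, Finsupp.le_def]
    intro p
    by_cases hp : p ∈ n.support
    · have hT : p ∈ T := by
        have := hsuppT n hGn p hp
        rw [hTdef]
        simp only [Finset.mem_product, Finset.mem_range]
        omega
      have hBp : B p = W := by rw [hBdef, Finsupp.indicator_apply, dif_pos hT]
      rw [hBp]
      -- n p ≤ W
      have h1 := single_flow_le lam hp hGn.1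
      have hp1N : p.1 ≤ N := by have := hsuppT n hGn p hp; omega
      have h2 : ∑ i ∈ Finset.Icc 1 p.1, raiseSeq n lam i
          ≤ ∑ i ∈ Finset.Icc 1 N, raiseSeq n lam i := by
        refine Finset.sum_le_sum_of_subset_of_nonneg ?_ (fun i _ _ => hGn.2 i)
        intro x hx
        simp only [Finset.mem_Icc] at hx ⊢
        omega
      have h3 : ∑ i ∈ Finset.Icc 1 N, raiseSeq n lam i = ∑ i ∈ Finset.Icc 1 N, lam i := by
        refine prefix_raiseSeq_eq lam N (fun q hq => ?_)
        have := hGn.1 q hq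
        have := hsuppT n hGn q hq
        omega
      have h4 : 0 ≤ ∑ i ∈ Finset.Icc 1 p.1, lam i :=
        Finset.sum_nonneg (fun i _ => hlamnn i)
      have : (n p : ℤ) ≤ (W : ℤ) := by omega
      exact_mod_cast this
    · have : n p = 0 := Finsupp.notMem_support_iff.mp hp
      omega
  -- Step 1: Theta as a finite sum
  have step1 : Theta k lam = ∑ n ∈ Finset.Iic B, term n := by
    unfold Theta applyRO
    refine finsum_eq_sum_of_support_subset _ (fun n hn => ?_)
    have : term n ≠ 0 := hn
    by_contra hnot
    simp only [Finset.mem_coe] at hnot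
    exact this (htermzero n (fun hGn => hnot (hgoodIic n hGn)))
  set A : Finset ((ℕ × ℕ) →₀ ℕ) := (Finset.Iic B).filter Good with hA
  have step2 : Theta k lam = ∑ n ∈ A, term n := by
    rw [step1]
    symm
    refine Finset.sum_subset (Finset.filter_subset _ _) (fun x hx hxA => ?_)
    refine htermzero x (fun hGx => hxA ?_)
    rw [hA, Finset.mem_filter]
    exact ⟨hx, hGx⟩
  -- facts about members of A
  have hAgood : ∀ n ∈ A, Good n := fun n hn => (Finset.mem_filter.mp hn).2
  have hαfin : ∀ n ∈ A, ∀ m, N + 1 ≤ m → raiseSeq n lam m = 0 := by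
    intro n hn m hm
    rw [raiseSeq_eq_self, hlamzero m (by omega)]
    intro p hp
    have := hsuppT n (hAgood n hn) p hp
    omega
  -- Step 3: expand each term over the pi-set
  have step3 : ∀ n ∈ A, cmon (betaSeq k lam) (raiseSeq n lam)
      = ∑ g ∈ (Finset.range (N+1)).pi (fun i => Finset.range ((raiseSeq n lam i).toNat + 1)),
          ∏ i ∈ (Finset.range (N+1)).attach,
            (cvar (raiseSeq n lam i.1 - (g i.1 i.2 : ℤ)) * hNT (betaSeq k lam i.1) (g i.1 i.2)) := by
    intro n hn
    rw [cmon_eq_prod (hαfin n hn)]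
    exact Finset.prod_sum _ _ _
  -- the index set
  set Idx : Finset ((_ : (ℕ × ℕ) →₀ ℕ) × ((i : ℕ) → i ∈ Finset.range (N+1) → ℕ)) :=
    A.sigma (fun n => (Finset.range (N+1)).pi
      (fun i => Finset.range ((raiseSeq n lam i).toNat + 1))) with hIdx
  set E : ((_ : (ℕ × ℕ) →₀ ℕ) × ((i : ℕ) → i ∈ Finset.range (N+1) → ℕ)) → P :=
    fun x => roCoeff Upper (Cset k lam) x.1 • ∏ i ∈ (Finset.range (N+1)).attach,
      (cvar (raiseSeq x.1 lam i.1 - (x.2 i.1 i.2 : ℤ)) * hNT (betaSeq k lam i.1) (x.2 i.1 i.2))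
    with hE
  have step4 : Theta k lam = ∑ x ∈ Idx, E x := by
    rw [step2, hIdx, Finset.sum_sigma]
    refine Finset.sum_congr rfl (fun n hn => ?_)
    simp only [hterm]
    rw [step3 n hn, Finset.smul_sum]
  -- data associated to each index
  set Gf : ((_ : (ℕ × ℕ) →₀ ℕ) × ((i : ℕ) → i ∈ Finset.range (N+1) → ℕ)) → ℕ → ℕ :=
    fun x i => if h : i ∈ Finset.range (N+1) then x.2 i h else 0 with hGf
  set νf : ((_ : (ℕ × ℕ) →₀ ℕ) × ((i : ℕ) → i ∈ Finset.range (N+1) → ℕ)) → ℕ → ℤ :=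
    fun x i => if 1 ≤ i ∧ i ≤ N then raiseSeq x.1 lam i - (Gf x i : ℤ) else 0 with hνf
  set μf : ((_ : (ℕ × ℕ) →₀ ℕ) × ((i : ℕ) → i ∈ Finset.range (N+1) → ℕ)) → ℕ → ℤ :=
    fun x => sortSeq N (νf x) with hμf
  set sf : ((_ : (ℕ × ℕ) →₀ ℕ) × ((i : ℕ) → i ∈ Finset.range (N+1) → ℕ)) → Zt :=
    fun x => roCoeff Upper (Cset k lam) x.1 •
      ∏ i ∈ Finset.range (N+1), hNT' (betaSeq k lam i) ((Gf x i : ℤ)) with hsf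
  -- bound on Gf
  have hGle : ∀ x ∈ Idx, ∀ i, (Gf x i : ℤ) ≤ raiseSeq x.1 lam i ∨ Gf x i = 0 := by
    intro x hx i
    rw [hIdx, Finset.mem_sigma] at hx
    simp only [hGf]
    split
    · left
      rename_i h
      have := Finset.mem_pi.mp hx.2 i h
      rw [Finset.mem_range] at this
      have h2 : x.2 i h ≤ (raiseSeq x.1 lam i).toNat := by omega
      have h3 := (hAgood x.1 hx.1).2 i
      omega
    · right; rfl
  have hGnonneg : ∀ x ∈ Idx, ∀ i, 0 ≤ raiseSeq x.1 lam i - (Gf x i : ℤ) := by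
    intro x hx i
    rcases hGle x hx i with h | h
    · omega
    · rw [h]
      have := (hAgood x.1 (Finset.mem_sigma.mp (hIdx ▸ hx)).1).2 i
      push_cast
      omega
  have hν_nonneg : ∀ x ∈ Idx, ∀ i, 0 ≤ νf x i := by
    intro x hx i
    simp only [hνf]
    split
    · exact hGnonneg x hx i
    · exact le_refl 0
  have hν_zero : ∀ x, ∀ i, N < i → νf x i = 0 := by
    intro x i hi
    simp only [hνf]; rw [if_neg (by omega)]
  have hν_zero0 : ∀ x, νf x 0 = 0 := by
    intro x
    simp only [hνf]; rw [if_neg (by omega)]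
  -- key evaluation of E x
  have hEval : ∀ x ∈ Idx, E x = tEmbed (sf x) * cmon zeroSeq (μf x) := by
    intro x hx
    have hxA : x.1 ∈ A := (Finset.mem_sigma.mp (hIdx ▸ hx)).1
    have hGood1 := hAgood x.1 hxA
    -- rewrite the g-applications via Gf
    have hswap : ∀ i : {y // y ∈ Finset.range (N+1)}, x.2 i.1 i.2 = Gf x i.1 := by
      intro i
      simp only [hGf]
      rw [dif_pos i.2]
    have hprodsplit : ∏ i ∈ (Finset.range (N+1)).attach,
        (cvar (raiseSeq x.1 lam i.1 - (x.2 i.1 i.2 : ℤ)) * hNT (betaSeq k lam i.1) (x.2 i.1 i.2))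
        = (∏ i ∈ Finset.range (N+1), cvar (raiseSeq x.1 lam i - (Gf x i : ℤ)))
          * ∏ i ∈ Finset.range (N+1), hNT (betaSeq k lam i) ((Gf x i : ℤ)) := by
      rw [← Finset.prod_mul_distrib]
      rw [← Finset.prod_attach (Finset.range (N+1)) (fun i =>
        cvar (raiseSeq x.1 lam i - (Gf x i : ℤ)) * hNT (betaSeq k lam i) ((Gf x i : ℤ)))]
      refine Finset.prod_congr rfl (fun i _ => ?_)
      rw [hswap i]
    -- the cvar part equals cmon zeroSeq (μf x)
    have hcvar : ∏ i ∈ Finset.range (N+1), cvar (raiseSeq x.1 lam i - (Gf x i : ℤ))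
        = cmon zeroSeq (μf x) := by
      simp only [hμf]
      rw [sortSeq_cmon N (νf x) (hν_nonneg x hx) (hν_zero0 x)]
      refine Finset.prod_congr rfl (fun i hi => ?_)
      rcases Nat.eq_zero_or_pos i with rfl | hipos
      · rw [hν_zero0 x]
        have h1 : raiseSeq x.1 lam 0 = 0 := by
          rw [raiseSeq_eq_self, hlam0]
          intro p hp
          have := hGood1.1 p hp
          omega
        have h2 : (Gf x 0 : ℤ) = 0 := by
          have := hGnonneg x hx 0
          have := hGle x hx 0
          rcases this with h | h
          · omega
          · rw [h]; rfl
        rw [h1, h2, sub_zero]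
      · have hiN : i ≤ N := by
          rw [Finset.mem_range] at hi
          omega
        simp only [hνf]
        rw [if_pos ⟨hipos, hiN⟩]
    -- the hNT part
    have hhNT : ∏ i ∈ Finset.range (N+1), hNT (betaSeq k lam i) ((Gf x i : ℤ))
        = tEmbed (∏ i ∈ Finset.range (N+1), hNT' (betaSeq k lam i) ((Gf x i : ℤ))) := by
      rw [map_prod]
      exact Finset.prod_congr rfl (fun i _ => (tEmbed_hNT _ _).symm)
    simp only [hE, hsf]
    rw [hprodsplit, hcvar, hhNT]
    rw [map_zsmul, smul_mul_assoc,
      mul_comm (cmon zeroSeq (μf x)) (tEmbed (∏ i ∈ Finset.range (N+1),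
        hNT' (betaSeq k lam i) ((Gf x i : ℤ))))]
  -- the distinguished index
  set d : ((_ : (ℕ × ℕ) →₀ ℕ) × ((i : ℕ) → i ∈ Finset.range (N+1) → ℕ)) :=
    ⟨0, fun _ _ => 0⟩ with hd
  have hdIdx : d ∈ Idx := by
    rw [hIdx, Finset.mem_sigma]
    constructor
    · rw [hA, Finset.mem_filter]
      refine ⟨?_, ?_, ?_⟩
      · rw [Finset.mem_Iic, Finsupp.le_def]
        intro p
        simp [hd]
      · intro p hp
        simp [hd] at hp
      · intro m
        rw [raiseSeq_zero]
        exact hlamnn m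
    · rw [Finset.mem_pi]
      intro i hi
      simp [hd]
  have hEd : E d = cmon zeroSeq lam := by
    simp only [hE, hd]
    have hco : roCoeff Upper (Cset k lam) (0 : (ℕ × ℕ) →₀ ℕ) = 1 := by
      unfold roCoeff
      rw [Finsupp.support_zero, Finset.prod_empty]
    rw [hco, one_smul]
    have : ∀ i : {y // y ∈ Finset.range (N+1)},
        cvar (raiseSeq 0 lam i.1 - ((0:ℕ) : ℤ)) * hNT (betaSeq k lam i.1) ((0:ℕ) : ℤ)
          = cvar (lam i.1) := by
      intro i
      rw [raiseSeq_zero]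
      push_cast
      rw [sub_zero, hNT_zero, mul_one]
    rw [Finset.prod_congr rfl (fun i _ => this i)]
    rw [Finset.prod_attach (Finset.range (N+1)) (fun i => cvar (lam i))]
    rw [cmon_eq_prod (K := N+1) (fun m hm => hlamzero m (by omega))]
    exact Finset.prod_congr rfl (fun i _ => (cc_zero_left (lam i)).symm)
  -- define the Finsupp
  set a : (ℕ → ℤ) →₀ Zt := ∑ x ∈ Idx.erase d, Finsupp.single (μf x) (sf x) with ha
  -- properties of indices in Idx.erase d
  have hprefix_ν_α : ∀ x ∈ Idx, (∀ i ∈ Finset.Icc 1 N, Gf x i = 0) →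
      ∀ i, νf x i = raiseSeq x.1 lam i := by
    intro x hx hG0 i
    have hxA : x.1 ∈ A := (Finset.mem_sigma.mp (hIdx ▸ hx)).1
    rcases Nat.eq_zero_or_pos i with rfl | hipos
    · rw [hν_zero0 x]
      rw [raiseSeq_eq_self, hlam0]
      intro p hp
      have := (hAgood x.1 hxA).1 p hp
      omega
    · by_cases hiN : i ≤ N
      · simp only [hνf]
        rw [if_pos ⟨hipos, hiN⟩, hG0 i (Finset.mem_Icc.mpr ⟨hipos, hiN⟩)]
        push_cast
        ring
      · rw [hν_zero x i (by omega), hαfin x.1 hxA i (by omega)]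
  -- total sums
  have htotαlam : ∀ x ∈ Idx, ∑ i ∈ Finset.Icc 1 N, raiseSeq x.1 lam i
      = ∑ i ∈ Finset.Icc 1 N, lam i := by
    intro x hx
    have hxA : x.1 ∈ A := (Finset.mem_sigma.mp (hIdx ▸ hx)).1
    refine prefix_raiseSeq_eq lam N (fun q hq => ?_)
    have := (hAgood x.1 hxA).1 q hq
    have := hsuppT x.1 (hAgood x.1 hxA) q hq
    omega
  have hμsupp : ∀ x, (Function.support (μf x)) ⊆ ↑(Finset.Icc 1 N) := by
    intro x m hm
    simp only [Function.mem_support] at hm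
    simp only [Finset.coe_Icc, Set.mem_Icc]
    by_contra h
    push_neg at h
    rcases Nat.lt_or_ge m 1 with h1 | h1
    · have : m = 0 := by omega
      subst this
      exact hm ((sortSeq_isPartition N (νf x)).1)
    · exact hm (sortSeq_zero_of_gt (h h1))
  have hfinsum_lam : ∑ᶠ i, lam i = ∑ i ∈ Finset.Icc 1 N, lam i :=
    finsum_eq_sum_of_support_subset _ hlamsupp
  have hfinsum_μ : ∀ x ∈ Idx, ∑ᶠ i, μf x i
      = (∑ i ∈ Finset.Icc 1 N, lam i) - ∑ i ∈ Finset.Icc 1 N, (Gf x i : ℤ) := by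
    intro x hx
    rw [finsum_eq_sum_of_support_subset _ (hμsupp x)]
    simp only [hμf]
    rw [sortSeq_total N (νf x) (hν_nonneg x hx) le_rfl]
    rw [← htotαlam x hx, ← Finset.sum_sub_distrib]
    refine Finset.sum_congr rfl (fun i hi => ?_)
    rw [Finset.mem_Icc] at hi
    simp only [hνf]
    rw [if_pos ⟨hi.1, hi.2⟩]
  -- main support property
  have hPred : ∀ x ∈ Idx.erase d, IsPartition (μf x) ∧ μf x ≠ lam ∧
      (((∑ᶠ i, μf x i) = (∑ᶠ i, lam i) ∧
          ∀ m : ℕ, (∑ i ∈ Finset.Icc 1 m, lam i) ≤ ∑ i ∈ Finset.Icc 1 m, μf x i) ∨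
        (∑ᶠ i, μf x i) < ∑ᶠ i, lam i) := by
    intro x hxe
    have hx : x ∈ Idx := Finset.mem_of_mem_erase hxe
    have hxd : x ≠ d := Finset.ne_of_mem_erase hxe
    have hxA : x.1 ∈ A := (Finset.mem_sigma.mp (hIdx ▸ hx)).1
    have hGood1 := hAgood x.1 hxA
    have hGsum_nonneg : 0 ≤ ∑ i ∈ Finset.Icc 1 N, (Gf x i : ℤ) :=
      Finset.sum_nonneg (fun i _ => by positivity)
    refine ⟨sortSeq_isPartition N (νf x), ?_, ?_⟩
    · -- μf x ≠ lam
      intro heq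
      have h1 : ∑ᶠ i, μf x i = ∑ᶠ i, lam i := by rw [heq]
      rw [hfinsum_μ x hx, hfinsum_lam] at h1
      have hGzero : ∑ i ∈ Finset.Icc 1 N, (Gf x i : ℤ) = 0 := by omega
      have hG0 : ∀ i ∈ Finset.Icc 1 N, Gf x i = 0 := by
        intro i hi
        have := Finset.sum_eq_zero_iff_of_nonneg
          (fun i (_ : i ∈ Finset.Icc 1 N) => by positivity : ∀ i ∈ Finset.Icc 1 N, (0:ℤ) ≤ (Gf x i : ℤ))
          |>.mp hGzero i hi
        exact_mod_cast this
      have hνα := hprefix_ν_α x hx hG0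
      -- prefix equalities force x.1 = 0
      have hflat : ∀ m, ∑ i ∈ Finset.Icc 1 m, raiseSeq x.1 lam i
          = ∑ i ∈ Finset.Icc 1 m, lam i := by
        intro m
        have hle1 : ∑ i ∈ Finset.Icc 1 m, lam i
            ≤ ∑ i ∈ Finset.Icc 1 m, raiseSeq x.1 lam i :=
          prefix_raiseSeq_ge lam m hGood1.1
        have hle2 : ∑ i ∈ Finset.Icc 1 m, raiseSeq x.1 lam i
            ≤ ∑ i ∈ Finset.Icc 1 m, lam i := by
          have e1 : ∑ i ∈ Finset.Icc 1 m, raiseSeq x.1 lam i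
              = ∑ i ∈ Finset.Icc 1 m, νf x i :=
            Finset.sum_congr rfl (fun i _ => (hνα i).symm)
          have e2 : ∑ i ∈ Finset.Icc 1 m, νf x i ≤ ∑ i ∈ Finset.Icc 1 m, μf x i := by
            rw [hμf]
            exact sortSeq_prefix_ge N (νf x) (hν_nonneg x hx) (hν_zero x) m
          have e3 : ∑ i ∈ Finset.Icc 1 m, μf x i = ∑ i ∈ Finset.Icc 1 m, lam i := by
            rw [heq]
          omega
        omega
      have hn0 : x.1 = 0 := flow_zero lam hGood1.1 hflat
      -- conclude x = d
      apply hxd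
      have hx2 : x.2 = fun (_ : ℕ) (_ : _ ∈ Finset.range (N+1)) => (0:ℕ) := by
        funext i hi
        have h2 : x.2 i hi = Gf x i := by
          simp only [hGf]; rw [dif_pos hi]
        rw [h2]
        rcases Nat.eq_zero_or_pos i with rfl | hipos
        · have := hGle x hx 0
          have h3 : raiseSeq x.1 lam 0 = 0 := by
            rw [hn0, raiseSeq_zero, hlam0]
          rcases this with h4 | h4
          · rw [h3] at h4
            omega
          · exact h4
        · have hiN : i ≤ N := by
            rw [Finset.mem_range] at hi; omega
          exact hG0 i (Finset.mem_Icc.mpr ⟨hipos, hiN⟩)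
      rw [hd]
      cases x with
      | mk x1 x2 =>
        simp only at hn0 hx2
        subst hn0
        subst hx2
        rfl
    · -- the dichotomy
      by_cases hGzero : ∑ i ∈ Finset.Icc 1 N, (Gf x i : ℤ) = 0
      · left
        constructor
        · rw [hfinsum_μ x hx, hfinsum_lam, hGzero, sub_zero]
        · intro m
          have hG0 : ∀ i ∈ Finset.Icc 1 N, Gf x i = 0 := by
            intro i hi
            have := Finset.sum_eq_zero_iff_of_nonneg
              (fun i (_ : i ∈ Finset.Icc 1 N) => by positivity :
                ∀ i ∈ Finset.Icc 1 N, (0:ℤ) ≤ (Gf x i : ℤ)) |>.mp hGzero i hi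
            exact_mod_cast this
          have hνα := hprefix_ν_α x hx hG0
          have hle1 : ∑ i ∈ Finset.Icc 1 m, lam i
              ≤ ∑ i ∈ Finset.Icc 1 m, raiseSeq x.1 lam i :=
            prefix_raiseSeq_ge lam m hGood1.1
          have e1 : ∑ i ∈ Finset.Icc 1 m, raiseSeq x.1 lam i
              = ∑ i ∈ Finset.Icc 1 m, νf x i :=
            Finset.sum_congr rfl (fun i _ => (hνα i).symm)
          have e2 : ∑ i ∈ Finset.Icc 1 m, νf x i ≤ ∑ i ∈ Finset.Icc 1 m, μf x i := by
            rw [hμf]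
            exact sortSeq_prefix_ge N (νf x) (hν_nonneg x hx) (hν_zero x) m
          omega
      · right
        rw [hfinsum_μ x hx, hfinsum_lam]
        omega
  -- assemble
  refine ⟨a, ?_, ?_⟩
  · intro μ hμ
    rw [ha] at hμ
    have := Finsupp.support_finset_sum hμ
    rw [Finset.mem_biUnion] at this
    obtain ⟨x, hxe, hμx⟩ := this
    have : μ = μf x := by
      have := Finsupp.support_single_subset hμx
      rw [Finset.mem_singleton] at this
      exact this
    rw [this]
    exact hPred x hxe
  · have hfinal : a.sum (fun μ s => tEmbed s * cmon zeroSeq μ) = ∑ x ∈ Idx.erase d, E x := by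
      rw [ha]
      rw [← Finsupp.sum_finset_sum_index (fun μ => by rw [map_zero, zero_mul])
        (fun μ s₁ s₂ => by rw [map_add, add_mul])]
      refine Finset.sum_congr rfl (fun x hxe => ?_)
      rw [Finsupp.sum_single_index (by rw [map_zero, zero_mul])]
      exact (hEval x (Finset.mem_of_mem_erase hxe)).symm
    rw [step4, ← Finset.add_sum_erase Idx E hdIdx, hEd, hfinal]


end
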